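/- For 1 < α < 2 and x ∈ [0, π], the function Q(α,x) = 2 cos(α(θ(α,x) + (x-π)/2) - x), with θ(α,x) = -arctan((α-2) sin x / ((3α-2) - (α-2) cos x)), satisfies Q(α,x) ≤ 2 cos(πα/2) < 0. -/

import Mathlib

open Real

/-- `θ(α,x) = -arctan((α-2) sin x / ((3α-2) - (α-2) cos x))`. -/
noncomputable def theta (α x : ℝ) : ℝ :=
  -Real.arctan ((α - 2) * Real.sin x / ((3 * α - 2) - (α - 2) * Real.cos x))

/-- `Q(α,x) = 2 cos(α(θ(α,x) + (x-π)/2) - x)`. -/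
noncomputable def Qfun (α x : ℝ) : ℝ :=
  2 * Real.cos (α * (theta α x + (x - π) / 2) - x)

/-!
Since `θ(α,0) = 0` and `(2-α)/(2α) - ∂ₓθ` is a nonnegative multiple of `(α-1)(3α-2)(1 - cos x)`,
we get `0 ≤ αθ(α,x) ≤ (2-α)x/2` on `[0,π]`. Hence the argument of the cosine in `Q` lies in
`[-π, -πα/2]`, where `cos` is increasing, so `Q(α,x) ≤ 2 cos(πα/2)`, which is negative
as `πα/2 ∈ (π/2, π)`.
-/

theorem hasDerivAt_arctan_div {f g : ℝ → ℝ} {f' g' x : ℝ} (hf : HasDerivAt f f' x)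
    (hg : HasDerivAt g g' x) (hgx : g x ≠ 0) :
    HasDerivAt (fun y => arctan (f y / g y)) ((f' * g x - f x * g') / (g x ^ 2 + f x ^ 2)) x := by
  refine (hf.div hg hgx).arctan.congr_deriv ?_
  rw [Pi.div_apply]
  field_simp

section Theta

variable {a : ℝ}

lemma theta_denom_pos (ha : 1 < a) (y : ℝ) : 0 < (3 * a - 2) - (a - 2) * cos y := by
  nlinarith [cos_le_one y, neg_one_le_cos y]

lemma theta_nonneg (ha₁ : 1 < a) (ha₂ : a ≤ 2) {y : ℝ} (hy : 0 ≤ sin y) : 0 ≤ theta a y := by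
  rw [theta, neg_nonneg, ← arctan_zero]
  exact arctan_strictMono.monotone <|
    div_nonpos_of_nonpos_of_nonneg (mul_nonpos_of_nonpos_of_nonneg (by linarith) hy)
      (theta_denom_pos ha₁ y).le

lemma hasDerivAt_theta (ha : 1 < a) (y : ℝ) :
    HasDerivAt (theta a)
      ((2 - a) * ((3 * a - 2) * cos y + (2 - a)) /
        (((3 * a - 2) - (a - 2) * cos y) ^ 2 + ((a - 2) * sin y) ^ 2)) y := by
  have hN : HasDerivAt (fun z => (a - 2) * sin z) ((a - 2) * cos y) y :=
    (hasDerivAt_sin y).const_mul _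
  have hD : HasDerivAt (fun z => (3 * a - 2) - (a - 2) * cos z) ((a - 2) * sin y) y :=
    (((hasDerivAt_cos y).const_mul _).const_sub _).congr_deriv (by ring)
  refine (hasDerivAt_arctan_div hN hD (theta_denom_pos ha y).ne').neg.congr_deriv ?_
  rw [← neg_div]
  congr 1
  linear_combination (a - 2) ^ 2 * sin_sq_add_cos_sq y

lemma theta_deriv_le (ha₁ : 1 < a) (ha₂ : a ≤ 2) (y : ℝ) :
    (2 - a) * ((3 * a - 2) * cos y + (2 - a)) /
        (((3 * a - 2) - (a - 2) * cos y) ^ 2 + ((a - 2) * sin y) ^ 2) ≤ (2 - a) / (2 * a) := by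
  have hD := theta_denom_pos ha₁ y
  rw [div_le_div_iff₀ (by positivity) (by positivity)]
  have key : (2 - a) * ((3 * a - 2 - (a - 2) * cos y) ^ 2 + ((a - 2) * sin y) ^ 2) -
      (2 - a) * ((3 * a - 2) * cos y + (2 - a)) * (2 * a) =
      4 * ((2 - a) * (a - 1)) * (3 * a - 2) * (1 - cos y) := by
    linear_combination (2 - a) * (a - 2) ^ 2 * sin_sq_add_cos_sq y
  have : 0 ≤ 4 * ((2 - a) * (a - 1)) * (3 * a - 2) * (1 - cos y) := by
    have h₁ : 0 ≤ (2 - a) * (a - 1) := mul_nonneg (by linarith) (by linarith)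
    have h₂ : 0 ≤ 1 - cos y := sub_nonneg.2 (cos_le_one y)
    have h₃ : (0 : ℝ) ≤ 3 * a - 2 := by linarith
    positivity
  linarith

lemma theta_le (ha₁ : 1 < a) (ha₂ : a ≤ 2) {x : ℝ} (hx : 0 ≤ x) :
    theta a x ≤ (2 - a) / (2 * a) * x := by
  have h := image_sub_le_mul_sub_of_deriv_le (fun y => (hasDerivAt_theta ha₁ y).differentiableAt)
    (fun y => (hasDerivAt_theta ha₁ y).deriv ▸ theta_deriv_le ha₁ ha₂ y) hx
  have h₀ : theta a 0 = 0 := by simp [theta]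
  simpa [h₀] using h

end Theta

theorem Q_neg (α : ℝ) (h1 : 1 < α) (h2 : α < 2) (x : ℝ) (hx : x ∈ Set.Icc (0 : ℝ) π) :
    Qfun α x ≤ 2 * Real.cos (π * α / 2) ∧ 2 * Real.cos (π * α / 2) < 0 := by
  obtain ⟨hx₀, hxπ⟩ := hx
  have hθ₀ := theta_nonneg h1 h2.le (sin_nonneg_of_nonneg_of_le_pi hx₀ hxπ)
  have hθ := theta_le h1 h2.le hx₀
  have hαθ : α * theta α x ≤ (2 - α) * x / 2 := by
    calc α * theta α x ≤ α * ((2 - α) / (2 * α) * x) := by gcongr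
      _ = (2 - α) * x / 2 := by field_simp
  set Z := α * (theta α x + (x - π) / 2) - x with hZ
  have hZ_le : Z ≤ -(π * α / 2) := by linarith
  have hZ_ge : -π ≤ Z := by
    linarith [mul_nonneg (by linarith : 0 ≤ α) hθ₀, mul_nonneg (sub_nonneg.2 hxπ) (sub_nonneg.2 h2.le)]
  have hcos : cos Z ≤ cos (π * α / 2) := by
    rw [← cos_neg Z]
    exact cos_le_cos_of_nonneg_of_le_pi (by positivity) (by linarith) (by linarith)
  have hneg : cos (π * α / 2) < 0 :=
    cos_neg_of_pi_div_two_lt_of_lt (by nlinarith [pi_pos]) (by nlinarith [pi_pos])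
  exact ⟨by unfold Qfun; linarith, by linarith⟩
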